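/- arXiv:2211.05891 — 2 statements merged into one kernel-verified Lean document; each statement's English description precedes it below -/
import Mathlib

section
/- For the triangle P with vertices a = (0,0), b = (λ,0), c = (λ/2, 2) where 0 < λ ≤ 2, the degenerate closed tour that travels from p = (λ/2, √(1−(λ/2)²)) to q = (λ/2, 1) and back has length 2(1 − √(1−(λ/2)²)), and every point of the segment from a to b lies within Euclidean distance 1 of the segment pq. -/
open Set Metric Pointwise Filter MeasureTheory

/-- A closed tour: a continuous map on `[0,1]` with equal endpoints. -/
def IsClosedTour (T : ℝ → EuclideanSpace ℝ (Fin 2)) : Prop :=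
  ContinuousOn T (Set.Icc 0 1) ∧ T 0 = T 1

/-- A tour covers `S` with a radius-`r` cutter if every point of `S`
is within distance `r` of some point of the tour. -/
def Covers (r : ℝ) (T : ℝ → EuclideanSpace ℝ (Fin 2))
    (S : Set (EuclideanSpace ℝ (Fin 2))) : Prop :=
  ∀ p ∈ S, ∃ t ∈ Set.Icc (0 : ℝ) 1, dist p (T t) ≤ r

/-- The (Euclidean) length of a tour, as total variation on `[0,1]`. -/
noncomputable def tourLength (T : ℝ → EuclideanSpace ℝ (Fin 2)) : ℝ :=
  (eVariationOn T (Set.Icc 0 1)).toReal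

/-- The coverage of a tour: the Minkowski sum of its image with the closed `r`-disk. -/
noncomputable def coverage (r : ℝ) (T : ℝ → EuclideanSpace ℝ (Fin 2)) :
    Set (EuclideanSpace ℝ (Fin 2)) :=
  T '' Set.Icc 0 1 + Metric.closedBall 0 r

/-- The point `(x, y)` in the Euclidean plane. -/
noncomputable def pt (x y : ℝ) : EuclideanSpace ℝ (Fin 2) :=
  (WithLp.equiv 2 (Fin 2 → ℝ)).symm ![x, y]


lemma pt_dist (x y x' y' : ℝ) :
    dist (pt x y) (pt x' y') = Real.sqrt ((x - x')^2 + (y - y')^2) := by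
  rw [EuclideanSpace.dist_eq]
  congr 1
  simp [pt, Fin.sum_univ_two, Real.dist_eq, sq_abs]

/-- the degenerate closed tour from `p = (λ/2, √(1-(λ/2)²))` to
`q = (λ/2, 1)` and back has length `2(1 - √(1-(λ/2)²))`, and every point of the
base segment `ab` of the triangle lies within Euclidean distance `1` of the
segment `pq`. -/
theorem stmt5 (lam : ℝ) (h0 : 0 < lam) (h2 : lam ≤ 2)
    (a b p q : EuclideanSpace ℝ (Fin 2))
    (ha : a = pt 0 0) (hb : b = pt lam 0)
    (hp : p = pt (lam / 2) (Real.sqrt (1 - (lam / 2) ^ 2)))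
    (hq : q = pt (lam / 2) 1) :
    2 * dist p q = 2 * (1 - Real.sqrt (1 - (lam / 2) ^ 2)) ∧
    ∀ x ∈ segment ℝ a b, Metric.infDist x (segment ℝ p q) ≤ 1 := by
  have hlam : (lam / 2) ^ 2 ≤ 1 := by nlinarith
  have harg : 0 ≤ 1 - (lam / 2) ^ 2 := by linarith
  set s := Real.sqrt (1 - (lam / 2) ^ 2) with hs
  have hs1 : s ≤ 1 := Real.sqrt_le_one.mpr (by nlinarith [sq_nonneg (lam/2)])
  have hs0 : 0 ≤ s := Real.sqrt_nonneg _
  have hssq : s ^ 2 = 1 - (lam / 2) ^ 2 := Real.sq_sqrt harg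
  constructor
  · rw [hp, hq, pt_dist]
    have : (lam / 2 - lam / 2) ^ 2 + (s - 1) ^ 2 = (1 - s) ^ 2 := by ring
    rw [this, Real.sqrt_sq (by linarith)]
  · rintro x hx
    rw [ha, hb] at hx
    obtain ⟨u, v, hu, hv, huv, hx⟩ := hx
    have hxeq : x = pt (v * lam) 0 := by
      rw [← hx]
      apply PiLp.ext
      intro i
      fin_cases i <;>
        simp [pt, PiLp.add_apply, PiLp.smul_apply, smul_eq_mul]
    have hmem : p ∈ segment ℝ p q := left_mem_segment ℝ p q
    refine le_trans (Metric.infDist_le_dist_of_mem hmem) ?_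
    rw [hxeq, hp, pt_dist]
    have hv1 : v ≤ 1 := by linarith
    have h1 : (v * lam - lam / 2) ^ 2 + (0 - s) ^ 2 ≤ 1 := by
      nlinarith [hssq, mul_nonneg hv (sub_nonneg.mpr hv1), sq_nonneg lam,
        mul_nonneg (mul_nonneg hv (sub_nonneg.mpr hv1)) (sq_nonneg lam)]
    calc Real.sqrt ((v * lam - lam / 2) ^ 2 + (0 - s) ^ 2) ≤ Real.sqrt 1 :=
          Real.sqrt_le_sqrt h1
      _ = 1 := Real.sqrt_one
end

section
/- Let q, r ∈ ℝ² and p a point with d(p,q) = d(p,r) = 1, where the unit circles around q and r are internally tangent to a smooth convex curve S⁺ at p from the same side. If the segment qr is not orthogonal to the tangent line of S⁺ at p, then at least one of the open unit disks around q or r contains points of S⁺ other than p. -/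
open Set Metric Pointwise Filter MeasureTheory

open scoped InnerProductSpace Topology

/-! Since `(p - q) - (p - w) = w - q`, the tangent `γ'(0)` is not orthogonal to `p - c` for one of
the centres `c ∈ {q, w}`. For that centre `s ↦ ‖γ s - c‖²` has derivative `2⟪p - c, γ'(0)⟫ ≠ 0`
at `0`, so by Fermat's theorem `0` is not a local minimum: arbitrarily close to `0` the curve is at
distance `< 1` from `c`, and such points differ from `p`. -/

theorem frequently_dist_lt_of_inner_deriv_ne_zero {E : Type*} [NormedAddCommGroup E]
    [InnerProductSpace ℝ E] {γ : ℝ → E} {t : ℝ} {c : E} (hγ : DifferentiableAt ℝ γ t)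
    (h : ⟪γ t - c, deriv γ t⟫_ℝ ≠ 0) : ∃ᶠ s in 𝓝 t, dist (γ s) c < dist (γ t) c := by
  intro hmin
  have hlocmin : IsLocalMin (fun s => ‖γ s - c‖ ^ 2) t := by
    filter_upwards [hmin] with s hs
    rw [not_lt, dist_eq_norm, dist_eq_norm] at hs
    gcongr
  have hderiv := (hγ.hasDerivAt.sub_const c).norm_sq
  exact h (by simpa using hlocmin.hasDerivAt_eq_zero hderiv)

theorem stmt14_general (γ : ℝ → EuclideanSpace ℝ (Fin 2))
    (p q w : EuclideanSpace ℝ (Fin 2))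
    (hγ : ContDiff ℝ 1 γ) (hp : γ 0 = p)
    (hq : dist p q = 1) (hw : dist p w = 1)
    (hnotorth : ⟪w - q, deriv γ 0⟫_ℝ ≠ 0) :
    ∀ δ > 0, ∃ s : ℝ, |s| < δ ∧ γ s ≠ p ∧
      (dist (γ s) q < 1 ∨ dist (γ s) w < 1) := by
  intro δ hδ
  have hdiff : DifferentiableAt ℝ γ 0 := hγ.differentiable one_ne_zero 0
  have hcloser : ∃ᶠ s in 𝓝 0, dist (γ s) q < 1 ∨ dist (γ s) w < 1 := by
    have hsplit : ⟪w - q, deriv γ 0⟫_ℝ = ⟪p - q, deriv γ 0⟫_ℝ - ⟪p - w, deriv γ 0⟫_ℝ := by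
      rw [← inner_sub_left, sub_sub_sub_cancel_left]
    by_cases hqtang : ⟪p - q, deriv γ 0⟫_ℝ = 0
    · have hwtang : ⟪γ 0 - w, deriv γ 0⟫_ℝ ≠ 0 := by
        rw [hp]; intro h; exact hnotorth (by rw [hsplit, hqtang, h, sub_zero])
      refine (frequently_dist_lt_of_inner_deriv_ne_zero hdiff hwtang).mono fun s hs => ?_
      exact Or.inr (by rwa [hp, hw] at hs)
    · refine (frequently_dist_lt_of_inner_deriv_ne_zero hdiff (hp ▸ hqtang)).mono fun s hs => ?_
      exact Or.inl (by rwa [hp, hq] at hs)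
  obtain ⟨s, hs, hsδ⟩ := (hcloser.and_eventually (eventually_abs_sub_lt 0 hδ)).exists
  refine ⟨s, by simpa using hsδ, ?_, hs⟩
  rintro rfl
  rcases hs with hs | hs <;> linarith

/-- let `γ` be a smooth curve (`S⁺`) through `p = γ 0` with
nonvanishing tangent, and let `q`, `w` be at distance `1` from `p` (centers of
unit circles through `p`). If the segment `q w` is not orthogonal to the
tangent of the curve at `p`, then at least one of the open unit disks around
`q` or `w` contains points of the curve other than `p`, arbitrarily close
to `p`. -/
theorem stmt14 (γ : ℝ → EuclideanSpace ℝ (Fin 2))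
    (p q w : EuclideanSpace ℝ (Fin 2))
    (hγ : ContDiff ℝ 1 γ) (hp : γ 0 = p) (htang : deriv γ 0 ≠ 0)
    (hq : dist p q = 1) (hw : dist p w = 1)
    (hnotorth : ⟪w - q, deriv γ 0⟫_ℝ ≠ 0) :
    ∀ δ > 0, ∃ s : ℝ, |s| < δ ∧ γ s ≠ p ∧
      (dist (γ s) q < 1 ∨ dist (γ s) w < 1) :=
  stmt14_general γ p q w hγ hp hq hw hnotorth
end
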